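/- arXiv:2508.13473 — 5 statements merged into one kernel-verified Lean document; each statement's English description precedes it below -/
import Mathlib

section
/- Consider the recursion x_k = ζ^{c_{k-1}}((1-b)x_0 + b x_{k-1}) + (1-ζ^{c_{k-1}}) u_0, with x_0, u_0 ∈ [-1,1], ζ ∈ (0,1], b ∈ [0,1], and binary click values c_j ∈ {0,1}. Then for every k ≥ 0, x_k = (1 - Γ_{k-1}) x_0 + Γ_{k-1} u_0, where Γ_{k-1} = (1-ζ) ∑_{j=0}^{k-1} c_j b^{k-j-1} ζ^{∑_{n=j+1}^{k-1} c_n}. -/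
/-! Because `c_k ∈ {0, 1}`, `ζ ^ c_k = 1 - (1 - ζ) c_k`, so `Γ` obeys the affine recursion
`Γ_k = ζ ^ c_k * b * Γ_{k-1} + (1 - ζ ^ c_k)`. This is exactly the recursion satisfied by the
weight of `u_0` in `x_k`, while the weights of `x_0` and `u_0` always sum to one. -/

open Finset

section ClickSum

variable {R : Type*}

/-- The paper's `Γ_{k-1}` is `(1 - ζ) * clickSum ζ b c k`. -/
def clickSum [CommSemiring R] (ζ b : R) (c : ℕ → ℕ) (k : ℕ) : R :=
  ∑ j ∈ range k, (c j : R) * b ^ (k - j - 1) * ζ ^ (∑ n ∈ Ico (j + 1) k, c n)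

theorem clickSum_succ [CommSemiring R] (ζ b : R) (c : ℕ → ℕ) (k : ℕ) :
    clickSum ζ b c (k + 1) = ζ ^ c k * b * clickSum ζ b c k + c k := by
  rw [clickSum, clickSum, sum_range_succ, mul_sum]
  congr 1
  · refine sum_congr rfl fun j hj => ?_
    have hjk : j < k := mem_range.mp hj
    rw [sum_Ico_succ_top (by omega), show k + 1 - j - 1 = k - j - 1 + 1 by omega, pow_succ,
      pow_add]
    ring
  · simp

theorem pow_eq_one_sub_mul_of_eq_zero_or_eq_one [CommRing R] (ζ : R) {m : ℕ}
    (hm : m = 0 ∨ m = 1) : ζ ^ m = 1 - (1 - ζ) * m := by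
  rcases hm with rfl | rfl <;> simp

theorem opinion_eq_of_recurrence [CommRing R] (x0 u0 ζ b : R) (x : ℕ → R) (c : ℕ → ℕ)
    (hx0 : x 0 = x0) (hc : ∀ j, c j = 0 ∨ c j = 1)
    (hrec : ∀ k, x (k + 1) = ζ ^ c k * ((1 - b) * x0 + b * x k) + (1 - ζ ^ c k) * u0) (k : ℕ) :
    x k = (1 - (1 - ζ) * clickSum ζ b c k) * x0 + (1 - ζ) * clickSum ζ b c k * u0 := by
  induction k with
  | zero => simp [hx0, clickSum]
  | succ k ih =>
    rw [hrec, ih, clickSum_succ, pow_eq_one_sub_mul_of_eq_zero_or_eq_one ζ (hc k)]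
    ring

end ClickSum

theorem opinion_closed_form_general
    (x0 u0 ζ b : ℝ) (x : ℕ → ℝ) (c : ℕ → ℕ)
    (hx0 : x 0 = x0)
    (hc : ∀ j, c j = 0 ∨ c j = 1)
    (hrec : ∀ k, x (k + 1) =
      ζ ^ (c k) * ((1 - b) * x0 + b * x k) + (1 - ζ ^ (c k)) * u0) :
    ∀ k, x k =
      (1 - (1 - ζ) * ∑ j ∈ Finset.range k,
          (c j : ℝ) * b ^ (k - j - 1) * ζ ^ (∑ n ∈ Finset.Ico (j + 1) k, c n)) * x0
      + ((1 - ζ) * ∑ j ∈ Finset.range k,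
          (c j : ℝ) * b ^ (k - j - 1) * ζ ^ (∑ n ∈ Finset.Ico (j + 1) k, c n)) * u0 :=
  opinion_eq_of_recurrence x0 u0 ζ b x c hx0 hc hrec

/-- Closed form of the opinion recursion (Lemma 1):
`x_k = (1 - Γ_{k-1}) x_0 + Γ_{k-1} u_0`. -/
theorem opinion_closed_form
    (x0 u0 ζ b : ℝ) (x : ℕ → ℝ) (c : ℕ → ℕ)
    (hx0 : x 0 = x0) (hx0mem : x0 ∈ Set.Icc (-1 : ℝ) 1) (hu0 : u0 ∈ Set.Icc (-1 : ℝ) 1)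
    (hζ : ζ ∈ Set.Ioc (0 : ℝ) 1) (hb : b ∈ Set.Icc (0 : ℝ) 1)
    (hc : ∀ j, c j = 0 ∨ c j = 1)
    (hrec : ∀ k, x (k + 1) =
      ζ ^ (c k) * ((1 - b) * x0 + b * x k) + (1 - ζ ^ (c k)) * u0) :
    ∀ k, x k =
      (1 - (1 - ζ) * ∑ j ∈ Finset.range k,
          (c j : ℝ) * b ^ (k - j - 1) * ζ ^ (∑ n ∈ Finset.Ico (j + 1) k, c n)) * x0
      + ((1 - ζ) * ∑ j ∈ Finset.range k,
          (c j : ℝ) * b ^ (k - j - 1) * ζ ^ (∑ n ∈ Finset.Ico (j + 1) k, c n)) * u0 :=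
  opinion_closed_form_general x0 u0 ζ b x c hx0 hc hrec
end

section
/- Let c_0, c_1, ..., c_{k-1} be i.i.d. Bernoulli(γ_0) random variables with γ_0 ∈ [0,1], and let ζ ∈ (0,1], b ∈ [0,1]. Define Γ_{k-1} = (1-ζ) ∑_{j=0}^{k-1} c_j b^{k-j-1} ζ^{∑_{n=j+1}^{k-1} c_n}. Then E[Γ_{k-1}] = γ_0 (1-ζ) (1 - r^k)/(1 - r), where r = b(γ_0 ζ + 1 - γ_0), provided r ≠ 1. -/
/-!
Expanding `Γ_{k-1}` as a sum over `j`, the `j`-th term is `b^{k-j-1}` times a product of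
independent factors: the click `c_j` and one factor `ζ^{c_n}` for each later step `n > j`.
Under the Bernoulli product weight its expectation therefore factorises into
`γ₀ (γ₀ζ + 1 - γ₀)^{k-j-1}`, and summing over `j` leaves a geometric series in `r`.
-/

open Finset

theorem sum_prod_ite_mul_eq_prod_add {ι R : Type*} [Fintype ι] [DecidableEq ι] [CommSemiring R]
    (p q : R) (g : ι → Bool → R) :
    ∑ c : ι → Bool, ∏ i, (if c i then p else q) * g i (c i)
      = ∏ i, (p * g i true + q * g i false) := by
  rw [← Fintype.prod_sum fun i x => (if x then p else q) * g i x]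
  simp only [Fintype.sum_bool, if_true, Bool.false_eq_true, if_false]

theorem sum_fin_reflect_eq_sum_range {M : Type*} [AddCommMonoid M] (k : ℕ) (f : ℕ → M) :
    ∑ j : Fin k, f (k - (j : ℕ) - 1) = ∑ m ∈ range k, f m := by
  rw [← Fin.sum_univ_eq_sum_range, ← Equiv.sum_comp Fin.revPerm]
  refine sum_congr rfl fun j _ => ?_
  simp only [Fin.revPerm_apply, Fin.val_rev]
  congr 1
  omega

theorem sum_bernoulli_click_mul_zeta_pow_clicks_after (k : ℕ) (γ0 ζ : ℝ) (j : Fin k) :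
    ∑ c : Fin k → Bool, (∏ i : Fin k, if c i then γ0 else 1 - γ0) *
        ((if c j then (1 : ℝ) else 0) *
          ζ ^ (∑ n ∈ univ.filter (fun n : Fin k => (j : ℕ) < (n : ℕ)), if c n then 1 else 0))
      = γ0 * (γ0 * ζ + 1 - γ0) ^ (k - (j : ℕ) - 1) := by
  let g : Fin k → Bool → ℝ := fun i x =>
    (if i = j then (if x then 1 else 0) else 1) *
      (if (j : ℕ) < (i : ℕ) then ζ ^ (if x then 1 else 0) else 1)
  have integrand_eq_prod : ∀ c : Fin k → Bool,
      (∏ i : Fin k, if c i then γ0 else 1 - γ0) *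
        ((if c j then (1 : ℝ) else 0) *
          ζ ^ (∑ n ∈ univ.filter (fun n : Fin k => (j : ℕ) < (n : ℕ)), if c n then 1 else 0))
        = ∏ i, (if c i then γ0 else 1 - γ0) * g i (c i) := by
    intro c
    simp only [g, prod_mul_distrib, prod_ite_eq', mem_univ, if_true, ← prod_filter,
      prod_pow_eq_pow_sum]
  have factor_eq : ∀ i : Fin k, γ0 * g i true + (1 - γ0) * g i false
      = (if i = j then γ0 else 1) * (if (j : ℕ) < (i : ℕ) then γ0 * ζ + 1 - γ0 else 1) := by
    intro i
    by_cases hij : i = j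
    · subst hij
      simp [g]
    · by_cases hji : j < i
      · simp [g, hij, hji]
        ring
      · simp [g, hij, hji]
  have later_steps : (univ.filter fun i : Fin k => (j : ℕ) < (i : ℕ)) = Ioi j := by
    ext i
    simp
  rw [sum_congr rfl fun c _ => integrand_eq_prod c, sum_prod_ite_mul_eq_prod_add]
  simp only [factor_eq, prod_mul_distrib, prod_ite_eq', mem_univ, if_true]
  rw [← prod_filter, prod_const, later_steps, Fin.card_Ioi]
  congr 2
  omega

theorem expected_gamma_fixed_policy_general
    (k : ℕ) (γ0 ζ b : ℝ)
    (hr : b * (γ0 * ζ + 1 - γ0) ≠ 1) :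
    ∑ c : Fin k → Bool,
        (∏ j : Fin k, if c j then γ0 else 1 - γ0) *
          ((1 - ζ) * ∑ j : Fin k,
            (if c j then (1 : ℝ) else 0) * b ^ (k - (j : ℕ) - 1) *
              ζ ^ (∑ n ∈ Finset.univ.filter (fun n : Fin k => (j : ℕ) < (n : ℕ)),
                    (if c n then 1 else 0)))
      = γ0 * (1 - ζ) * (1 - (b * (γ0 * ζ + 1 - γ0)) ^ k) / (1 - b * (γ0 * ζ + 1 - γ0)) := by
  set r := b * (γ0 * ζ + 1 - γ0)
  calc _ = (1 - ζ) * ∑ j : Fin k, b ^ (k - (j : ℕ) - 1) *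
          ∑ c : Fin k → Bool, (∏ i : Fin k, if c i then γ0 else 1 - γ0) *
            ((if c j then (1 : ℝ) else 0) *
              ζ ^ (∑ n ∈ univ.filter (fun n : Fin k => (j : ℕ) < (n : ℕ)),
                    if c n then 1 else 0)) := by
        simp only [mul_sum]
        rw [sum_comm]
        refine sum_congr rfl fun j _ => sum_congr rfl fun c _ => ?_
        ring
    _ = γ0 * (1 - ζ) * ∑ m ∈ range k, r ^ m := by
        simp only [sum_bernoulli_click_mul_zeta_pow_clicks_after, r]
        rw [← sum_fin_reflect_eq_sum_range k, mul_sum, mul_sum]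
        refine sum_congr rfl fun j _ => ?_
        rw [mul_pow]
        ring
    _ = _ := by
        rw [eq_div_iff (sub_ne_zero.mpr hr.symm), mul_assoc, geom_sum_mul_neg]

/-- Expected value of the recommendation weight `Γ_{k-1}` under i.i.d. Bernoulli(γ₀)
clicks: `E[Γ_{k-1}] = γ₀(1-ζ)(1-r^k)/(1-r)` with `r = b(γ₀ζ + 1 - γ₀)`.
The expectation is written as a sum over all click paths `c : Fin k → Bool`,
each weighted by its Bernoulli product probability. -/
theorem expected_gamma_fixed_policy
    (k : ℕ) (γ0 ζ b : ℝ)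
    (hγ0 : γ0 ∈ Set.Icc (0 : ℝ) 1) (hζ : ζ ∈ Set.Ioc (0 : ℝ) 1)
    (hb : b ∈ Set.Icc (0 : ℝ) 1)
    (hr : b * (γ0 * ζ + 1 - γ0) ≠ 1) :
    ∑ c : Fin k → Bool,
        (∏ j : Fin k, if c j then γ0 else 1 - γ0) *
          ((1 - ζ) * ∑ j : Fin k,
            (if c j then (1 : ℝ) else 0) * b ^ (k - (j : ℕ) - 1) *
              ζ ^ (∑ n ∈ Finset.univ.filter (fun n : Fin k => (j : ℕ) < (n : ℕ)),
                    (if c n then 1 else 0)))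
      = γ0 * (1 - ζ) * (1 - (b * (γ0 * ζ + 1 - γ0)) ^ k) / (1 - b * (γ0 * ζ + 1 - γ0)) :=
  expected_gamma_fixed_policy_general k γ0 ζ b hr
end

section
/- Under the fixed clicking policy with click probability γ_0 ∈ [0,1], innate opinion x_0 ∈ [-1,1], fixed recommendation u_0 ∈ [-1,1], ζ = α+β ∈ (0,1], b = β/(α+β), the expected opinion at time k satisfies E[X_k] = x_0 + γ_0(1-ζ) · (1 - (b(γ_0ζ+1-γ_0))^k)/(1 - b(γ_0ζ+1-γ_0)) · (u_0 - x_0). -/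
open Finset

/-- Opinion trajectory determined by a boolean click path. -/
def opinionPath (x0 u0 ζ b : ℝ) (c : ℕ → Bool) : ℕ → ℝ
  | 0 => x0
  | k + 1 =>
      ζ ^ (cond (c k) 1 0 : ℕ) * ((1 - b) * x0 + b * opinionPath x0 u0 ζ b c k)
        + (1 - ζ ^ (cond (c k) 1 0 : ℕ)) * u0

lemma opinionPath_congr (x0 u0 ζ b : ℝ) :
    ∀ (k : ℕ) (f g : ℕ → Bool), (∀ j < k, f j = g j) →
      opinionPath x0 u0 ζ b f k = opinionPath x0 u0 ζ b g k := by
  intro k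
  induction k with
  | zero => intro f g _; rfl
  | succ k ih =>
    intro f g h
    simp only [opinionPath, h k (Nat.lt_succ_self k),
      ih f g (fun j hj => h j (hj.trans (Nat.lt_succ_self k)))]

lemma weight_sum (γ0 : ℝ) :
    ∀ k, ∑ c : Fin k → Bool, ∏ j : Fin k, (if c j then γ0 else 1 - γ0) = 1 := by
  intro k
  induction k with
  | zero => simp
  | succ k ih =>
    rw [← (Fin.snocEquiv (fun _ => Bool)).sum_comp
      (fun c => ∏ j : Fin (k+1), (if c j then γ0 else 1 - γ0))]
    unfold Fin.snocEquiv; simp only [Equiv.coe_fn_mk]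
    rw [Fintype.sum_prod_type]
    have : ∀ (b' : Bool) (c' : Fin k → Bool),
        (∏ j : Fin (k+1), (if (Fin.snoc c' b' : Fin (k+1) → Bool) j then γ0 else 1 - γ0))
          = (∏ j : Fin k, (if c' j then γ0 else 1 - γ0)) * (if b' then γ0 else 1 - γ0) := by
      intro b' c'
      have := Fin.prod_snoc (M := ℝ) (if b' then γ0 else 1 - γ0)
        (fun j => if c' j then γ0 else 1 - γ0)
      rw [← this]
      apply Finset.prod_congr rfl
      intro j _
      refine Fin.lastCases ?_ ?_ j <;> simp
    simp only [this, Finset.sum_mul, ← Finset.mul_sum]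
    rw [Fintype.sum_bool]
    rw [← Finset.sum_mul, ih]; ring_nf; rw [← Finset.sum_mul, ih]; simp

lemma expected_key (x0 u0 γ0 ζ b : ℝ)
    (hr : b * (γ0 * ζ + 1 - γ0) ≠ 1) :
    ∀ k : ℕ, ∑ c : Fin k → Bool,
        (∏ j : Fin k, if c j then γ0 else 1 - γ0) *
          opinionPath x0 u0 ζ b (fun j => if h : j < k then c ⟨j, h⟩ else false) k
      = x0 + γ0 * (1 - ζ) * (1 - (b * (γ0 * ζ + 1 - γ0)) ^ k)
          / (1 - b * (γ0 * ζ + 1 - γ0)) * (u0 - x0) := by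
  have h1r : 1 - b * (γ0 * ζ + 1 - γ0) ≠ 0 := sub_ne_zero.2 (Ne.symm hr)
  intro k
  induction k with
  | zero => simp [opinionPath]
  | succ k ih =>
    rw [← (Fin.snocEquiv (fun _ => Bool)).sum_comp
      (fun c : Fin (k+1) → Bool =>
        (∏ j : Fin (k+1), if c j then γ0 else 1 - γ0) *
          opinionPath x0 u0 ζ b (fun j => if h : j < k+1 then c ⟨j, h⟩ else false) (k+1))]
    unfold Fin.snocEquiv; simp only [Equiv.coe_fn_mk]
    rw [Fintype.sum_prod_type]
    have hW : ∀ (b' : Bool) (c' : Fin k → Bool),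
        (∏ j : Fin (k+1), (if (Fin.snoc c' b' : Fin (k+1) → Bool) j then γ0 else 1 - γ0))
          = (∏ j : Fin k, (if c' j then γ0 else 1 - γ0)) * (if b' then γ0 else 1 - γ0) := by
      intro b' c'
      rw [← Fin.prod_snoc (M := ℝ) (if b' then γ0 else 1 - γ0)
        (fun j => if c' j then γ0 else 1 - γ0)]
      refine Finset.prod_congr rfl fun j _ => ?_
      refine Fin.lastCases ?_ ?_ j <;> simp
    have hpath : ∀ (b' : Bool) (c' : Fin k → Bool),
        opinionPath x0 u0 ζ b
            (fun j => if h : j < k+1 then (Fin.snoc c' b' : Fin (k+1) → Bool) ⟨j, h⟩ else false)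
            (k+1)
          = ζ ^ (cond b' 1 0 : ℕ) * ((1 - b) * x0 +
              b * opinionPath x0 u0 ζ b (fun j => if h : j < k then c' ⟨j, h⟩ else false) k)
            + (1 - ζ ^ (cond b' 1 0 : ℕ)) * u0 := by
      intro b' c'
      rw [opinionPath]
      have hk : (if h : k < k+1 then (Fin.snoc c' b' : Fin (k+1) → Bool) ⟨k, h⟩ else false) = b' := by
        rw [dif_pos (Nat.lt_succ_self k)]
        exact Fin.snoc_last _ _
      rw [hk, opinionPath_congr x0 u0 ζ b k _
        (fun j => if h : j < k then c' ⟨j, h⟩ else false) ?_]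
      intro j hj
      simp only [dif_pos hj, dif_pos (hj.trans (Nat.lt_succ_self k))]
      exact Fin.snoc_castSucc (α := fun _ => Bool) (p := c') (x := b') (i := ⟨j, hj⟩)
    have inner : ∀ b' : Bool,
        ∑ c' : Fin k → Bool,
          (∏ j : Fin (k+1), if (Fin.snoc c' b' : Fin (k+1) → Bool) j then γ0 else 1 - γ0) *
            opinionPath x0 u0 ζ b
              (fun j => if h : j < k+1 then (Fin.snoc c' b' : Fin (k+1) → Bool) ⟨j, h⟩ else false)
              (k+1)
          = (if b' then γ0 else 1 - γ0) *
              (ζ ^ (cond b' 1 0 : ℕ) * ((1 - b) * x0 +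
                b * (x0 + γ0 * (1 - ζ) * (1 - (b * (γ0 * ζ + 1 - γ0)) ^ k)
                  / (1 - b * (γ0 * ζ + 1 - γ0)) * (u0 - x0)))
              + (1 - ζ ^ (cond b' 1 0 : ℕ)) * u0) := by
      intro b'
      calc ∑ c' : Fin k → Bool,
            (∏ j : Fin (k+1), if (Fin.snoc c' b' : Fin (k+1) → Bool) j then γ0 else 1 - γ0) *
              opinionPath x0 u0 ζ b
                (fun j => if h : j < k+1 then (Fin.snoc c' b' : Fin (k+1) → Bool) ⟨j, h⟩ else false)
                (k+1)
          = ∑ c' : Fin k → Bool,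
              (((if b' then γ0 else 1 - γ0) *
                  (ζ ^ (cond b' 1 0 : ℕ) * ((1 - b) * x0) + (1 - ζ ^ (cond b' 1 0 : ℕ)) * u0)) *
                (∏ j : Fin k, if c' j then γ0 else 1 - γ0)
              + ((if b' then γ0 else 1 - γ0) * (ζ ^ (cond b' 1 0 : ℕ) * b)) *
                ((∏ j : Fin k, if c' j then γ0 else 1 - γ0) *
                  opinionPath x0 u0 ζ b (fun j => if h : j < k then c' ⟨j, h⟩ else false) k)) := by
            refine Finset.sum_congr rfl fun c' _ => ?_
            rw [hW b' c', hpath b' c']; ring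
        _ = _ := by
            rw [Finset.sum_add_distrib, ← Finset.mul_sum, ← Finset.mul_sum,
              weight_sum γ0 k, ih]; ring
    simp only [inner]
    rw [Fintype.sum_bool]
    simp only [if_pos, if_neg, cond_true, cond_false, pow_one, pow_zero, Bool.false_eq_true,
      if_true, if_false]
    rw [pow_succ]
    field_simp
    ring

/-- Expected opinion at time `k` under the fixed clicking policy (Proposition 1):
`E[X_k] = x_0 + γ₀(1-ζ)(1 - (b(γ₀ζ+1-γ₀))^k)/(1 - b(γ₀ζ+1-γ₀)) (u_0 - x_0)`. -/
theorem expected_opinion_fixed_policy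
    (k : ℕ) (x0 u0 α β γ0 ζ b : ℝ)
    (hα : 0 ≤ α) (hβ : 0 ≤ β) (hζdef : ζ = α + β) (hζ : ζ ∈ Set.Ioc (0 : ℝ) 1)
    (hbdef : b = β / (α + β))
    (hx0 : x0 ∈ Set.Icc (-1 : ℝ) 1) (hu0 : u0 ∈ Set.Icc (-1 : ℝ) 1)
    (hγ0 : γ0 ∈ Set.Icc (0 : ℝ) 1)
    (hr : b * (γ0 * ζ + 1 - γ0) ≠ 1) :
    ∑ c : Fin k → Bool,
        (∏ j : Fin k, if c j then γ0 else 1 - γ0) *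
          opinionPath x0 u0 ζ b (fun j => if h : j < k then c ⟨j, h⟩ else false) k
      = x0 + γ0 * (1 - ζ) * (1 - (b * (γ0 * ζ + 1 - γ0)) ^ k)
          / (1 - b * (γ0 * ζ + 1 - γ0)) * (u0 - x0) := by
  exact expected_key x0 u0 γ0 ζ b hr k
end

section
/- Let (γ_k) be a nonnegative stochastic process adapted to a filtration, with γ_0 ∈ (0,1], and suppose γ_{k+1} = γ_k(1 - (1 - 1/κ)I_k) where κ > 1 and I_k ∈ {0,1} satisfies E[I_k | γ_k] ≥ γ_k^M for a fixed integer M ≥ 1. Then ∑_{k=0}^∞ E[γ_k^{M+1}] ≤ γ_0/(1 - 1/κ) < ∞. -/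
open MeasureTheory

/-- Summability of the `(M+1)`-st moments of the adaptive clicking probability:
if `γ_{k+1} = γ_k (1 - (1 - 1/κ) I_k)` with `E[I_k | γ_k] ≥ γ_k^M`, then
`∑_k E[γ_k^{M+1}] ≤ γ₀/(1 - 1/κ) < ∞`. -/
theorem adaptive_gamma_moment_sum
    {Ω : Type*} [MeasurableSpace Ω] (μ : Measure Ω) [IsProbabilityMeasure μ]
    (γ I : ℕ → Ω → ℝ) (γ0 κ : ℝ) (M : ℕ)
    (hκ : 1 < κ) (hM : 1 ≤ M) (hγ0 : 0 < γ0 ∧ γ0 ≤ 1)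
    (hmeas : ∀ k, Measurable (γ k)) (hInt : ∀ k, Integrable (I k) μ)
    (hpos : ∀ k ω, 0 ≤ γ k ω) (hinit : ∀ ω, γ 0 ω = γ0)
    (hI : ∀ k ω, I k ω = 0 ∨ I k ω = 1)
    (hrec : ∀ k ω, γ (k + 1) ω = γ k ω * (1 - (1 - 1 / κ) * I k ω))
    (hcond : ∀ k, ∀ᵐ ω ∂μ,
      γ k ω ^ M ≤ (μ[I k | MeasurableSpace.comap (γ k) Real.measurableSpace]) ω) :
    Summable (fun k => ∫ ω, γ k ω ^ (M + 1) ∂μ) ∧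
      ∑' k, ∫ ω, γ k ω ^ (M + 1) ∂μ ≤ γ0 / (1 - 1 / κ) := by
  obtain ⟨hγ0pos, hγ0le⟩ := hγ0
  have hκ0 : (0:ℝ) < κ := lt_trans one_pos hκ
  have hc : 0 < 1 - 1 / κ := by
    have : 1 / κ < 1 := by rw [div_lt_one hκ0]; exact hκ
    linarith
  -- γ_k ≤ 1 everywhere
  have hle1 : ∀ k ω, γ k ω ≤ 1 := by
    intro k
    induction k with
    | zero => intro ω; rw [hinit]; exact hγ0le
    | succ k ih =>
      intro ω
      rw [hrec]
      rcases hI k ω with h | h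
      · simp only [h, mul_zero, sub_zero, mul_one]; exact ih ω
      · rw [h, mul_one]
        have h1 : 1 - (1 - 1 / κ) ≤ 1 := by linarith
        have h0 : 0 ≤ 1 - (1 - 1 / κ) := by
          have : 0 ≤ 1 / κ := by positivity
          linarith
        calc γ k ω * (1 - (1 - 1 / κ)) ≤ 1 * 1 :=
              mul_le_mul (ih ω) h1 h0 zero_le_one
          _ = 1 := one_mul 1
  have hbdd : ∀ k, ∀ ω, ‖γ k ω‖ ≤ 1 := by
    intro k ω
    rw [Real.norm_eq_abs, abs_of_nonneg (hpos k ω)]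
    exact hle1 k ω
  -- integrability facts
  have hIntGam : ∀ k, Integrable (γ k) μ := fun k =>
    Integrable.mono' (integrable_const 1) (hmeas k).aestronglyMeasurable
      (Filter.Eventually.of_forall (hbdd k))
  have hIntPow : ∀ k, Integrable (fun ω => γ k ω ^ (M + 1)) μ := by
    intro k
    refine Integrable.mono' (integrable_const 1)
      ((hmeas k).pow_const (M + 1)).aestronglyMeasurable ?_
    filter_upwards with ω
    rw [Real.norm_eq_abs, abs_of_nonneg (pow_nonneg (hpos k ω) _)]
    exact pow_le_one₀ (hpos k ω) (hle1 k ω)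
  have hIntMul : ∀ k, Integrable (γ k * I k) μ := fun k =>
    (hInt k).bdd_mul (hmeas k).aestronglyMeasurable (Filter.Eventually.of_forall (hbdd k))
  -- the key one-step inequality on first moments
  have key : ∀ k, (1 - 1 / κ) * (∫ ω, γ k ω ^ (M + 1) ∂μ) ≤
      (∫ ω, γ k ω ∂μ) - ∫ ω, γ (k + 1) ω ∂μ := by
    intro k
    have hm : MeasurableSpace.comap (γ k) Real.measurableSpace ≤ _ :=
      measurable_iff_comap_le.mp (hmeas k)
    have hγm : StronglyMeasurable[MeasurableSpace.comap (γ k) Real.measurableSpace] (γ k) :=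
      (Measurable.of_comap_le le_rfl).stronglyMeasurable
    have hIntCE : Integrable
        (fun ω => γ k ω * (μ[I k|MeasurableSpace.comap (γ k) Real.measurableSpace]) ω) μ :=
      (integrable_condExp).bdd_mul (hmeas k).aestronglyMeasurable (Filter.Eventually.of_forall (hbdd k))
    have h1 : (∫ ω, γ k ω ^ (M + 1) ∂μ) ≤
        ∫ ω, γ k ω * (μ[I k|MeasurableSpace.comap (γ k) Real.measurableSpace]) ω ∂μ := by
      refine integral_mono_ae (hIntPow k) hIntCE ?_
      filter_upwards [hcond k] with ω hω
      calc γ k ω ^ (M + 1) = γ k ω * γ k ω ^ M := by ring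
        _ ≤ γ k ω * (μ[I k|MeasurableSpace.comap (γ k) Real.measurableSpace]) ω :=
          mul_le_mul_of_nonneg_left hω (hpos k ω)
    have h2 : ∫ ω, γ k ω * (μ[I k|MeasurableSpace.comap (γ k) Real.measurableSpace]) ω ∂μ =
        ∫ ω, γ k ω * I k ω ∂μ := by
      have hce := condExp_mul_of_stronglyMeasurable_left (μ := μ) hγm (hIntMul k) (hInt k)
      calc ∫ ω, γ k ω * (μ[I k|MeasurableSpace.comap (γ k) Real.measurableSpace]) ω ∂μ
          = ∫ ω, (μ[(γ k) * (I k)|MeasurableSpace.comap (γ k) Real.measurableSpace]) ω ∂μ :=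
            integral_congr_ae hce.symm
        _ = ∫ ω, (γ k * I k) ω ∂μ := integral_condExp hm
        _ = ∫ ω, γ k ω * I k ω ∂μ := rfl
    have step1 : (∫ ω, γ k ω ^ (M + 1) ∂μ) ≤ ∫ ω, γ k ω * I k ω ∂μ := h2 ▸ h1
    have step2 : ∫ ω, γ (k + 1) ω ∂μ =
        (∫ ω, γ k ω ∂μ) - (1 - 1 / κ) * ∫ ω, γ k ω * I k ω ∂μ := by
      have heq : ∀ ω, γ (k + 1) ω = γ k ω - (1 - 1 / κ) * (γ k ω * I k ω) := by
        intro ω; rw [hrec]; ring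
      calc ∫ ω, γ (k + 1) ω ∂μ
          = ∫ ω, (γ k ω - (1 - 1 / κ) * (γ k ω * I k ω)) ∂μ :=
            integral_congr_ae (Filter.Eventually.of_forall heq)
        _ = (∫ ω, γ k ω ∂μ) - ∫ ω, (1 - 1 / κ) * (γ k ω * I k ω) ∂μ :=
            integral_sub (hIntGam k) ((hIntMul k).const_mul _)
        _ = (∫ ω, γ k ω ∂μ) - (1 - 1 / κ) * ∫ ω, γ k ω * I k ω ∂μ := by
            rw [integral_const_mul]
    rw [step2]
    have := mul_le_mul_of_nonneg_left step1 hc.le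
    linarith
  -- partial sums
  set b : ℕ → ℝ := fun k => ∫ ω, γ k ω ^ (M + 1) ∂μ with hb_def
  have hbnn : ∀ k, 0 ≤ b k := fun k =>
    integral_nonneg fun ω => pow_nonneg (hpos k ω) _
  have ha0 : (∫ ω, γ 0 ω ∂μ) = γ0 := by
    have : (fun ω => γ 0 ω) = fun _ => γ0 := funext hinit
    rw [this, integral_const, probReal_univ]; simp
  have hann : ∀ n, 0 ≤ ∫ ω, γ n ω ∂μ := fun n => integral_nonneg (hpos n)
  have hpartial : ∀ n, ∑ i ∈ Finset.range n, b i ≤ γ0 / (1 - 1 / κ) := by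
    intro n
    rw [le_div_iff₀ hc]
    have htel : ∑ i ∈ Finset.range n,
        ((∫ ω, γ i ω ∂μ) - ∫ ω, γ (i + 1) ω ∂μ) =
        (∫ ω, γ 0 ω ∂μ) - ∫ ω, γ n ω ∂μ :=
      Finset.sum_range_sub' (fun i => ∫ ω, γ i ω ∂μ) n
    have hsum : ∑ i ∈ Finset.range n, (1 - 1 / κ) * b i ≤
        (∫ ω, γ 0 ω ∂μ) - ∫ ω, γ n ω ∂μ := by
      rw [← htel]
      exact Finset.sum_le_sum fun i _ => key i
    have hγ0bd : ∑ i ∈ Finset.range n, (1 - 1 / κ) * b i ≤ γ0 := by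
      rw [ha0] at hsum
      have := hann n
      linarith
    calc (∑ i ∈ Finset.range n, b i) * (1 - 1 / κ)
        = ∑ i ∈ Finset.range n, (1 - 1 / κ) * b i := by
          rw [Finset.sum_mul]; exact Finset.sum_congr rfl fun i _ => mul_comm _ _
      _ ≤ γ0 := hγ0bd
  have hsummable : Summable b := summable_of_sum_range_le hbnn hpartial
  exact ⟨hsummable, Summable.tsum_le_of_sum_range_le hsummable hpartial⟩
end

section
/- Couple two click processes on the same i.i.d. uniform draws Z_0,...,Z_{K-1} ∈ [0,1]: c_k = 1{Z_k ≤ γ_k} and c'_k = 1{Z_k ≤ γ'_k} with γ'_k ≤ γ_k pointwise. Let X_k and X'_k both start at x_0 and evolve by X_{k+1} = F(X_k, c_k), where F(x,1) = αx_0 + βx + (1-α-β)u_0 and F(x,0) = (1-b)x_0 + bx, with α ≥ β ≥ 0, 0 < α+β ≤ 1, b = β/(α+β), x_0, u_0 ∈ [-1,1]. Then |X'_K - x_0| ≤ |X_K - x_0| on every sample path, and hence E[|X'_K - x_0|] ≤ E[|X_K - x_0|]. -/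
open MeasureTheory ProbabilityTheory

/-- Coupling lemma (Lemma 3): coupling two click processes on the same i.i.d.
uniform draws, with the conservative process having pointwise smaller clicking
probabilities, the conservative opinion stays at least as close to `x₀` on
every sample path, hence in expectation. -/
theorem coupled_drift_monotone
    {Ω : Type*} [MeasurableSpace Ω] (μ : Measure Ω) [IsProbabilityMeasure μ]
    (x0 u0 α β b : ℝ) (K : ℕ)
    (Z γ γ' X X' : ℕ → Ω → ℝ) (c c' : ℕ → Ω → ℝ)
    (hα : 0 ≤ β) (hαβ : β ≤ α) (hζ : 0 < α + β ∧ α + β ≤ 1)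
    (hbdef : b = β / (α + β))
    (hx0 : x0 ∈ Set.Icc (-1 : ℝ) 1) (hu0 : u0 ∈ Set.Icc (-1 : ℝ) 1)
    (hZunif : ∀ k, μ.map (Z k) = (MeasureTheory.volume.restrict (Set.Icc (0 : ℝ) 1)))
    (hZindep : iIndepFun Z μ)
    (hγle : ∀ k ω, γ' k ω ≤ γ k ω)
    (hc : ∀ k ω, c k ω = if Z k ω ≤ γ k ω then 1 else 0)
    (hc' : ∀ k ω, c' k ω = if Z k ω ≤ γ' k ω then 1 else 0)
    (hX0 : ∀ ω, X 0 ω = x0) (hX'0 : ∀ ω, X' 0 ω = x0)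
    (hXrec : ∀ k ω, X (k + 1) ω =
      if c k ω = 1 then α * x0 + β * X k ω + (1 - α - β) * u0
      else (1 - b) * x0 + b * X k ω)
    (hX'rec : ∀ k ω, X' (k + 1) ω =
      if c' k ω = 1 then α * x0 + β * X' k ω + (1 - α - β) * u0
      else (1 - b) * x0 + b * X' k ω)
    (hInt : Integrable (fun ω => |X K ω - x0|) μ)
    (hInt' : Integrable (fun ω => |X' K ω - x0|) μ) :
    (∀ ω, |X' K ω - x0| ≤ |X K ω - x0|) ∧
      ∫ ω, |X' K ω - x0| ∂μ ≤ ∫ ω, |X K ω - x0| ∂μ := by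
  obtain ⟨hab, hab1⟩ := hζ
  have hα0 : (0:ℝ) ≤ α := le_trans hα hαβ
  have hb0 : 0 ≤ b := by rw [hbdef]; positivity
  have hbβ : β ≤ b := by
    rw [hbdef, le_div_iff₀ hab]; nlinarith
  have hb1α : b ≤ 1 - α := by
    rw [hbdef, div_le_iff₀ hab]; nlinarith
  have hceq : ∀ k ω, (c k ω = 1 ↔ Z k ω ≤ γ k ω) := by
    intro k ω
    by_cases h : Z k ω ≤ γ k ω <;> simp [hc, h]
  have hceq' : ∀ k ω, (c' k ω = 1 ↔ Z k ω ≤ γ' k ω) := by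
    intro k ω
    by_cases h : Z k ω ≤ γ' k ω <;> simp [hc', h]
  have main : ∀ ω, |X' K ω - x0| ≤ |X K ω - x0| := by
    intro ω
    rcases le_total x0 u0 with hs | hs
    · have inv : ∀ k, 0 ≤ X' k ω - x0 ∧ X' k ω - x0 ≤ X k ω - x0 ∧
          X k ω - x0 ≤ u0 - x0 := by
        intro k
        induction k with
        | zero => rw [hX0, hX'0]; constructor; · linarith
                  constructor <;> linarith
        | succ k ih =>
          obtain ⟨h1, h2, h3⟩ := ih
          rw [hXrec, hX'rec]; simp only [hceq, hceq']
          by_cases hg : Z k ω ≤ γ k ω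
          · by_cases hg' : Z k ω ≤ γ' k ω
            · rw [if_pos hg, if_pos hg']
              refine ⟨by nlinarith, by nlinarith, by nlinarith⟩
            · rw [if_pos hg, if_neg hg']
              refine ⟨by nlinarith, by nlinarith, by nlinarith⟩
          · have hg' : ¬ Z k ω ≤ γ' k ω := fun h => hg (le_trans h (hγle k ω))
            rw [if_neg hg, if_neg hg']
            refine ⟨by nlinarith, by nlinarith, by nlinarith⟩
      obtain ⟨h1, h2, h3⟩ := inv K
      rw [abs_of_nonneg h1, abs_of_nonneg (le_trans h1 h2)]; exact h2
    · have inv : ∀ k, X' k ω - x0 ≤ 0 ∧ X k ω - x0 ≤ X' k ω - x0 ∧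
          u0 - x0 ≤ X k ω - x0 := by
        intro k
        induction k with
        | zero => rw [hX0, hX'0]; constructor; · linarith
                  constructor <;> linarith
        | succ k ih =>
          obtain ⟨h1, h2, h3⟩ := ih
          rw [hXrec, hX'rec]; simp only [hceq, hceq']
          by_cases hg : Z k ω ≤ γ k ω
          · by_cases hg' : Z k ω ≤ γ' k ω
            · rw [if_pos hg, if_pos hg']
              refine ⟨by nlinarith, by nlinarith, by nlinarith⟩
            · rw [if_pos hg, if_neg hg']
              refine ⟨by nlinarith, by nlinarith, by nlinarith⟩
          · have hg' : ¬ Z k ω ≤ γ' k ω := fun h => hg (le_trans h (hγle k ω))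
            rw [if_neg hg, if_neg hg']
            refine ⟨by nlinarith, by nlinarith, by nlinarith⟩
      obtain ⟨h1, h2, h3⟩ := inv K
      rw [abs_of_nonpos h1, abs_of_nonpos (le_trans h2 h1)]; linarith
  exact ⟨main, integral_mono hInt' hInt main⟩
end
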